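/- (Loop removal) If y ∈ Y(x) is a minimizing path (J(y) = min over Y(x)) and y_k = y_m for some k < m, then removing the loop does not change the cost: J(y) = J(y_0, ..., y_k, y_{m+1}, y_{m+2}, ...). -/

import Mathlib

open scoped BigOperators

/-- Cost of the finite path `y 0, ..., y t`. -/
noncomputable def pathCost {X : Type*} (K : X → X → ℝ) (q : X → ℝ) (y : ℕ → X) (t : ℕ) : ℝ :=
  (∑ k ∈ Finset.range t, K (y k) (y (k + 1))) + q (y t)

/-- Expected cost of an infinite path with per-step termination probability `p`:
`J(y) = ∑_{t=1}^∞ (1-p)^{t-1} p · Cost(y_0,...,y_t)`. -/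
noncomputable def Jcost {X : Type*} (K : X → X → ℝ) (q : X → ℝ) (p : ℝ) (y : ℕ → X) : ℝ :=
  ∑' t : ℕ, (1 - p) ^ t * p * pathCost K q y (t + 1)

/-!
Splitting `J` after the first `n` steps gives `J u = A_n(u) + (1 - p)^n J(u_n, u_{n+1}, …)`, where
`A_n(u)` only depends on `u_0, …, u_n`. Hence replacing the tail of a path from a vertex `a` by
another tail starting at `a` changes `J` by `(1 - p)^n` times the change in the tail cost. Cutting
the loop replaces the tail from `y_k` by the tail from `y_m`, and repeating the loop replaces the
tail from `y_m` by the tail from `y_k`; minimality of `y` makes both changes nonnegative, so the two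
tails have the same cost and cutting the loop does not change `J`.
-/

open Finset

section

variable {X : Type*}

def pathFrom (u : ℕ → X) (n : ℕ) : ℕ → X := fun s => u (n + s)

@[simp]
lemma pathFrom_apply (u : ℕ → X) (n s : ℕ) : pathFrom u n s = u (n + s) := rfl

@[simp]
lemma pathFrom_zero (u : ℕ → X) : pathFrom u 0 = u := funext fun s => by simp

lemma pathFrom_pathFrom (u : ℕ → X) (n l : ℕ) : pathFrom (pathFrom u n) l = pathFrom u (n + l) :=
  funext fun s => by simp [add_assoc]

def splice (u : ℕ → X) (n : ℕ) (v : ℕ → X) : ℕ → X := fun j => if j ≤ n then u j else v (j - n)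

lemma splice_of_le (u : ℕ → X) {n : ℕ} (v : ℕ → X) {j : ℕ} (hj : j ≤ n) :
    splice u n v j = u j := if_pos hj

lemma pathFrom_splice {u : ℕ → X} {n : ℕ} {v : ℕ → X} (h : v 0 = u n) :
    pathFrom (splice u n v) n = v := by
  funext s
  rcases Nat.eq_zero_or_pos s with rfl | hs
  · simp [splice, h]
  · simp [splice, show ¬ n + s ≤ n by omega]

lemma splice_succ_mem {N : X → Finset X} {u : ℕ → X} {n : ℕ} {v : ℕ → X}
    (hu : ∀ j < n, u (j + 1) ∈ N (u j)) (hv : ∀ j, v (j + 1) ∈ N (v j)) (h : v 0 = u n) (j : ℕ) :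
    splice u n v (j + 1) ∈ N (splice u n v j) := by
  rcases lt_or_ge j n with hj | hj
  · rw [splice_of_le u v hj, splice_of_le u v hj.le]
    exact hu j hj
  · have := hv (j - n)
    rwa [← pathFrom_splice h, pathFrom_apply, pathFrom_apply, show n + (j - n) = j by omega,
      show n + (j - n + 1) = j + 1 by omega] at this

section Cost

variable (K : X → X → ℝ) (q : X → ℝ) {p CK Cq : ℝ}

lemma pathCost_succ (u : ℕ → X) (t : ℕ) :
    pathCost K q u (t + 1) = K (u 0) (u 1) + pathCost K q (pathFrom u 1) t := by
  simp only [pathCost, sum_range_succ', pathFrom_apply]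
  simp only [add_comm 1, add_assoc]
  ring

lemma abs_pathCost_le (hK : ∀ a b, |K a b| ≤ CK) (hq : ∀ a, |q a| ≤ Cq) (u : ℕ → X) (t : ℕ) :
    |pathCost K q u t| ≤ t * CK + Cq :=
  calc |pathCost K q u t|
      ≤ (∑ j ∈ range t, |K (u j) (u (j + 1))|) + |q (u t)| :=
        (abs_add_le _ _).trans (by gcongr; exact abs_sum_le_sum_abs _ _)
    _ ≤ (∑ _j ∈ range t, CK) + Cq := by gcongr <;> simp only [hK, hq]
    _ = t * CK + Cq := by simp

lemma summable_Jcost (hK : ∀ a b, |K a b| ≤ CK) (hq : ∀ a, |q a| ≤ Cq) (hp : 0 < p)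
    (hp1 : p ≤ 1) (u : ℕ → X) :
    Summable fun t => (1 - p) ^ t * p * pathCost K q u (t + 1) := by
  have hr : ‖1 - p‖ < 1 := by rw [Real.norm_of_nonneg (by linarith)]; linarith
  have hbound : Summable fun t : ℕ => ((t : ℝ) ^ 1 * (1 - p) ^ t) * CK + (1 - p) ^ t * (CK + Cq) :=
    ((summable_pow_mul_geometric_of_norm_lt_one 1 hr).mul_right _).add
      ((summable_geometric_of_norm_lt_one hr).mul_right _)
  refine hbound.of_norm_bounded fun t => ?_
  have hr0 : 0 ≤ (1 - p) ^ t := pow_nonneg (by linarith) t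
  rw [Real.norm_eq_abs, abs_mul, abs_mul, abs_of_nonneg hr0, abs_of_pos hp]
  calc (1 - p) ^ t * p * |pathCost K q u (t + 1)|
      ≤ (1 - p) ^ t * 1 * ((t + 1 : ℕ) * CK + Cq) := by
        gcongr
        exact abs_pathCost_le K q hK hq u (t + 1)
    _ = _ := by push_cast; ring

lemma Jcost_eq_add_pathFrom_one (hK : ∀ a b, |K a b| ≤ CK) (hq : ∀ a, |q a| ≤ Cq) (hp : 0 < p)
    (hp1 : p ≤ 1) (u : ℕ → X) :
    Jcost K q p u = K (u 0) (u 1) + p * q (u 1) + (1 - p) * Jcost K q p (pathFrom u 1) := by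
  have hr0 : 0 ≤ 1 - p := by linarith
  have hgeom : ∑' t : ℕ, (1 - p) ^ t * p = 1 := by
    rw [tsum_mul_right, tsum_geometric_of_lt_one hr0 (by linarith), sub_sub_cancel,
      inv_mul_cancel₀ hp.ne']
  have hsplit : ∀ t : ℕ, (1 - p) ^ (t + 1) * p * pathCost K q u (t + 1 + 1) =
      (1 - p) * ((1 - p) ^ t * p * K (u 0) (u 1)
        + (1 - p) ^ t * p * pathCost K q (pathFrom u 1) (t + 1)) := fun t => by
    rw [pathCost_succ]; ring
  rw [Jcost, (summable_Jcost K q hK hq hp hp1 u).tsum_eq_zero_add, tsum_congr hsplit, tsum_mul_left,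
    ((summable_geometric_of_lt_one hr0 (by linarith)).mul_right p |>.mul_right _).tsum_add
      (summable_Jcost K q hK hq hp hp1 _), tsum_mul_right, hgeom, ← Jcost, pathCost]
  simp only [sum_range_one, zero_add]
  ring

lemma Jcost_eq_sum_add_pathFrom (hK : ∀ a b, |K a b| ≤ CK) (hq : ∀ a, |q a| ≤ Cq) (hp : 0 < p)
    (hp1 : p ≤ 1) (u : ℕ → X) (n : ℕ) :
    Jcost K q p u = ∑ i ∈ range n, (K (u i) (u (i + 1)) + p * q (u (i + 1))) * (1 - p) ^ i
      + (1 - p) ^ n * Jcost K q p (pathFrom u n) := by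
  induction n with
  | zero => simp
  | succ n ih =>
    rw [ih, Jcost_eq_add_pathFrom_one K q hK hq hp hp1 (pathFrom u n), pathFrom_pathFrom,
      sum_range_succ]
    simp only [pathFrom_apply, add_zero]
    ring

lemma Jcost_sub_Jcost_of_eqOn (hK : ∀ a b, |K a b| ≤ CK) (hq : ∀ a, |q a| ≤ Cq) (hp : 0 < p)
    (hp1 : p ≤ 1) {u v : ℕ → X} {n : ℕ} (h : ∀ j ≤ n, u j = v j) :
    Jcost K q p u - Jcost K q p v =
      (1 - p) ^ n * (Jcost K q p (pathFrom u n) - Jcost K q p (pathFrom v n)) := by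
  have hprefix : ∑ i ∈ range n, (K (u i) (u (i + 1)) + p * q (u (i + 1))) * (1 - p) ^ i =
      ∑ i ∈ range n, (K (v i) (v (i + 1)) + p * q (v (i + 1))) * (1 - p) ^ i :=
    sum_congr rfl fun i hi => by
      rw [mem_range] at hi
      rw [h i hi.le, h (i + 1) hi]
  rw [Jcost_eq_sum_add_pathFrom K q hK hq hp hp1 u n,
    Jcost_eq_sum_add_pathFrom K q hK hq hp hp1 v n, hprefix]
  ring

lemma Jcost_splice_sub_Jcost (hK : ∀ a b, |K a b| ≤ CK) (hq : ∀ a, |q a| ≤ Cq) (hp : 0 < p)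
    (hp1 : p ≤ 1) {u : ℕ → X} {n : ℕ} {v : ℕ → X} (h : v 0 = u n) :
    Jcost K q p (splice u n v) - Jcost K q p u =
      (1 - p) ^ n * (Jcost K q p v - Jcost K q p (pathFrom u n)) := by
  rw [Jcost_sub_Jcost_of_eqOn K q hK hq hp hp1 fun j hj => splice_of_le u v hj, pathFrom_splice h]

end Cost

end

theorem stmt12 {X : Type*} [Fintype X] (N : X → Finset X)
    (K : X → X → ℝ) (q : X → ℝ) (p : ℝ) (hp : 0 < p) (hp1 : p < 1)
    (x : X) (y : ℕ → X) (hy0 : y 0 = x) (hpath : ∀ k, y (k + 1) ∈ N (y k))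
    (hmin : ∀ z : ℕ → X, z 0 = x → (∀ k, z (k + 1) ∈ N (z k)) →
      Jcost K q p y ≤ Jcost K q p z)
    (k m : ℕ) (hkm : k < m) (heq : y k = y m) :
    Jcost K q p y = Jcost K q p (fun n => if n ≤ k then y n else y (n + (m - k))) := by
  obtain ⟨CK, hK⟩ := Finite.exists_le fun ab : X × X => |K ab.1 ab.2|
  obtain ⟨Cq, hq⟩ := Finite.exists_le fun a => |q a|
  have hcost : ∀ {n l : ℕ}, y n = y l →
      Jcost K q p (splice y n (pathFrom y l)) - Jcost K q p y =
        (1 - p) ^ n * (Jcost K q p (pathFrom y l) - Jcost K q p (pathFrom y n)) :=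
    fun h => Jcost_splice_sub_Jcost K q (fun a b => hK (a, b)) hq hp hp1.le (by simp [h])
  have hmin_splice : ∀ {n l : ℕ}, y n = y l →
      0 ≤ (1 - p) ^ n * (Jcost K q p (pathFrom y l) - Jcost K q p (pathFrom y n)) := fun h => by
    rw [← hcost h, sub_nonneg]
    exact hmin _ (by simp [splice, hy0])
      (splice_succ_mem (fun j _ => hpath j)
        (fun j => by simpa only [pathFrom_apply, ← add_assoc] using hpath _) (by simp [h]))
  have hpow : ∀ n, 0 < (1 - p) ^ n := fun n => pow_pos (by linarith) n
  have htail : Jcost K q p (pathFrom y k) = Jcost K q p (pathFrom y m) :=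
    le_antisymm (sub_nonneg.1 ((mul_nonneg_iff_of_pos_left (hpow k)).1 (hmin_splice heq)))
      (sub_nonneg.1 ((mul_nonneg_iff_of_pos_left (hpow m)).1 (hmin_splice heq.symm)))
  have hcut : (fun n => if n ≤ k then y n else y (n + (m - k))) = splice y k (pathFrom y m) := by
    funext j
    simp only [splice, pathFrom_apply]
    split_ifs <;> congr 1; omega
  rw [hcut, eq_comm, ← sub_eq_zero, hcost heq, htail, sub_self, mul_zero]
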